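/- Let G = (V,E) be a graph on n vertices with stabilizer generators g_i = X_i ∏_{k ∈ N(i)} Z_k, and for a ∈ {0,1}^n let P_a = ∏_{i=1}^n ((−1)^{a_i} g_i + 𝟙)/2 denote the projector onto the graph-basis vector labelled by a. Let M ⊆ {1,…,n} be a bipartition and let U_M = { i : N̄(i) ⊆ M or N̄(i) ⊆ M̄ } be the set of qubits lying in the same partition as all their neighbors, where N̄(i) = N(i) ∪ {i}. If a, b ∈ {0,1}^n and there exists a qubit i ∈ U_M with a_i ≠ b_i, then tr( P_b (P_a)^{T_M} ) = 0. -/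
import Mathlib


open Matrix Finset ComplexOrder

/-- Operators on `(ℂ²)^{⊗n}`, indexed by bit strings `{0,1}^n`. -/
abbrev QMat (n : ℕ) := Matrix (Fin n → Fin 2) (Fin n → Fin 2) ℂ

/-- The tensor product `A 0 ⊗ ⋯ ⊗ A (n-1)` of one-qubit operators. -/
def qtensor {n : ℕ} (A : Fin n → Matrix (Fin 2) (Fin 2) ℂ) : QMat n :=
  fun v w => ∏ a, A a (v a) (w a)

def PX : Matrix (Fin 2) (Fin 2) ℂ := !![0, 1; 1, 0]

def PZ : Matrix (Fin 2) (Fin 2) ℂ := !![1, 0; 0, -1]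

/-- Partial transpose on the qubits in `M`. -/
def qpt {n : ℕ} (M : Finset (Fin n)) (X : QMat n) : QMat n :=
  fun v w => X (fun a => if a ∈ M then w a else v a) (fun a => if a ∈ M then v a else w a)

/-- The stabilizer generator `g_i = X_i ∏_{k ∈ N(i)} Z_k` of the graph `G`. -/
def gGen {n : ℕ} (G : SimpleGraph (Fin n)) [DecidableRel G.Adj] (i : Fin n) : QMat n :=
  qtensor (fun a => if a = i then PX else if G.Adj i a then PZ else 1)

/-- The projector `P_a = ∏_i ((−1)^{a_i} g_i + 𝟙)/2` onto the graph-basis vector `a`. -/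
noncomputable def gBasisProj {n : ℕ} (G : SimpleGraph (Fin n)) [DecidableRel G.Adj]
    (a : Fin n → Fin 2) : QMat n :=
  ((List.finRange n).map (fun i => (2 : ℂ)⁻¹ • ((-1 : ℂ) ^ (a i : ℕ) • gGen G i + 1))).prod

namespace GPTAux

variable {n : ℕ}

lemma fin2 (x : Fin 2) : x = 0 ∨ x = 1 := by omega

lemma PX_diag_flip (x : Fin 2) : PX x (x + 1) = 1 := by
  rcases fin2 x with h | h <;> subst h
  · rw [show ((0 : Fin 2) + 1) = 1 from rfl]; norm_num [PX]
  · rw [show ((1 : Fin 2) + 1) = 0 from rfl]; norm_num [PX]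

lemma PX_diag (x : Fin 2) : PX x x = 0 := by
  rcases fin2 x with h | h <;> subst h <;> norm_num [PX]

lemma PZ_diag (x : Fin 2) : PZ x x = (-1 : ℂ) ^ (x : ℕ) := by
  rcases fin2 x with h | h <;> subst h <;> norm_num [PZ]

lemma PZ_off (x y : Fin 2) (h : x ≠ y) : PZ x y = 0 := by
  rcases fin2 x with h1 | h1 <;> rcases fin2 y with h2 | h2 <;> subst h1 <;> subst h2 <;>
    first | exact absurd rfl h | norm_num [PZ]

def flip (i : Fin n) (v : Fin n → Fin 2) : Fin n → Fin 2 := Function.update v i (v i + 1)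

lemma flip_apply_self (i : Fin n) (v : Fin n → Fin 2) : flip i v i = v i + 1 :=
  Function.update_self _ _ _

lemma flip_apply_ne (i : Fin n) (v : Fin n → Fin 2) {a : Fin n} (h : a ≠ i) :
    flip i v a = v a := Function.update_of_ne h _ _

lemma flip_flip (i : Fin n) (v : Fin n → Fin 2) : flip i (flip i v) = v := by
  funext a
  by_cases h : a = i
  · subst h
    have h2 : ∀ x : Fin 2, x + 1 + 1 = x := by decide
    rw [flip_apply_self, flip_apply_self, h2]
  · rw [flip_apply_ne _ _ h, flip_apply_ne _ _ h]

lemma flip_eq_iff {i : Fin n} {v w : Fin n → Fin 2} : w = flip i v ↔ v = flip i w := by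
  constructor <;> (rintro rfl; rw [flip_flip])

lemma flip_comm (i j : Fin n) (v : Fin n → Fin 2) : flip i (flip j v) = flip j (flip i v) := by
  by_cases h : i = j
  · subst h; rfl
  · funext a
    by_cases hi : a = i
    · subst hi
      have hij : a ≠ j := h
      rw [flip_apply_self, flip_apply_ne _ _ hij, flip_apply_ne _ _ hij, flip_apply_self]
    · by_cases hj : a = j
      · subst hj
        have hji : a ≠ i := fun hc => h hc.symm
        rw [flip_apply_ne _ _ hji, flip_apply_self, flip_apply_self, flip_apply_ne _ _ hji]
      · rw [flip_apply_ne _ _ hi, flip_apply_ne _ _ hj, flip_apply_ne _ _ hj,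
          flip_apply_ne _ _ hi]

variable (G : SimpleGraph (Fin n)) [DecidableRel G.Adj]

noncomputable def sgn (i : Fin n) (v : Fin n → Fin 2) : ℂ :=
  ∏ k ∈ G.neighborFinset i, (-1 : ℂ) ^ (v k : ℕ)

lemma neg_one_pow_succ (x : Fin 2) :
    (-1 : ℂ) ^ ((x + 1 : Fin 2) : ℕ) = -((-1 : ℂ) ^ (x : ℕ)) := by
  rcases fin2 x with h | h <;> subst h
  · rw [show ((0 : Fin 2) + 1) = 1 from rfl]; norm_num [Fin.val_one, Fin.val_zero]
  · rw [show ((1 : Fin 2) + 1) = 0 from rfl]; norm_num [Fin.val_one, Fin.val_zero]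

lemma sgn_flip (i j : Fin n) (v : Fin n → Fin 2) :
    sgn G i (flip j v) = (if G.Adj i j then -1 else 1) * sgn G i v := by
  by_cases hj : j ∈ G.neighborFinset i
  · rw [if_pos ((SimpleGraph.mem_neighborFinset _ _ _).1 hj)]
    rw [sgn, ← Finset.mul_prod_erase _ _ hj, sgn, ← Finset.mul_prod_erase _ _ hj]
    rw [flip_apply_self, neg_one_pow_succ]
    have hcong : ∏ k ∈ (G.neighborFinset i).erase j, (-1 : ℂ) ^ ((flip j v) k : ℕ)
        = ∏ k ∈ (G.neighborFinset i).erase j, (-1 : ℂ) ^ (v k : ℕ) :=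
      Finset.prod_congr rfl fun k hk => by
        rw [flip_apply_ne _ _ (Finset.ne_of_mem_erase hk)]
    rw [hcong]
    ring
  · rw [if_neg (fun h => hj ((SimpleGraph.mem_neighborFinset _ _ _).2 h)), one_mul, sgn, sgn]
    exact Finset.prod_congr rfl fun k hk => by
      rw [flip_apply_ne _ _ (fun hc : k = j => hj (hc ▸ hk))]

lemma sgn_flip_self (i : Fin n) (v : Fin n → Fin 2) : sgn G i (flip i v) = sgn G i v := by
  rw [sgn_flip, if_neg (G.irrefl), one_mul]

lemma sgn_mul_self (i : Fin n) (v : Fin n → Fin 2) : sgn G i v * sgn G i v = 1 := by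
  rw [sgn, ← Finset.prod_mul_distrib]
  apply Finset.prod_eq_one
  intro k _
  rw [← pow_add, ← two_mul, pow_mul]
  norm_num

lemma gGen_apply (i : Fin n) (v w : Fin n → Fin 2) :
    gGen G i v w = if w = flip i v then sgn G i v else 0 := by
  rw [gGen, qtensor]
  split_ifs with h
  · subst h
    have step : ∀ a ∈ Finset.univ,
        (if a = i then PX else if G.Adj i a then PZ else 1) (v a) (flip i v a)
          = (if a ∈ G.neighborFinset i then (-1 : ℂ) ^ (v a : ℕ) else 1) := by
      intro a _
      by_cases hk : a = i
      · subst hk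
        rw [if_pos rfl, if_neg (fun hm => G.irrefl ((SimpleGraph.mem_neighborFinset _ _ _).1 hm)),
          flip_apply_self, PX_diag_flip]
      · rw [if_neg hk, flip_apply_ne _ _ hk]
        by_cases ha : G.Adj i a
        · rw [if_pos ha, if_pos ((SimpleGraph.mem_neighborFinset _ _ _).2 ha), PZ_diag]
        · rw [if_neg ha, if_neg (fun hm => ha ((SimpleGraph.mem_neighborFinset _ _ _).1 hm)),
            Matrix.one_apply_eq]
    rw [Finset.prod_congr rfl step, Finset.prod_ite_mem, Finset.univ_inter, sgn]
  · have : ∃ a, w a ≠ flip i v a := by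
      by_contra hc
      push_neg at hc
      exact h (funext hc)
    obtain ⟨a, ha⟩ := this
    apply Finset.prod_eq_zero (Finset.mem_univ a)
    by_cases hk : a = i
    · subst hk
      rw [if_pos rfl]
      rw [flip_apply_self] at ha
      have hwa : w a = v a := by
        have h2 : ∀ x y : Fin 2, y ≠ x + 1 → y = x := by decide
        exact h2 _ _ ha
      rw [hwa, PX_diag]
    · rw [if_neg hk]
      rw [flip_apply_ne _ _ hk] at ha
      by_cases hadj : G.Adj i a
      · rw [if_pos hadj, PZ_off _ _ (Ne.symm ha)]
      · rw [if_neg hadj]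
        exact Matrix.one_apply_ne (Ne.symm ha)

lemma g_mul_apply (i : Fin n) (A : QMat n) (v w : Fin n → Fin 2) :
    (gGen G i * A) v w = sgn G i v * A (flip i v) w := by
  rw [Matrix.mul_apply]
  have step : ∀ u ∈ Finset.univ, gGen G i v u * A u w
      = if u = flip i v then sgn G i v * A (flip i v) w else 0 := by
    intro u _
    rw [gGen_apply]
    split_ifs with h
    · subst h; rfl
    · rw [zero_mul]
  rw [Finset.sum_congr rfl step, Finset.sum_ite_eq' Finset.univ, if_pos (Finset.mem_univ _)]

lemma mul_g_apply (i : Fin n) (A : QMat n) (v w : Fin n → Fin 2) :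
    (A * gGen G i) v w = sgn G i w * A v (flip i w) := by
  rw [Matrix.mul_apply]
  have step : ∀ u ∈ Finset.univ, A v u * gGen G i u w
      = if u = flip i w then sgn G i w * A v (flip i w) else 0 := by
    intro u _
    rw [gGen_apply]
    by_cases h : w = flip i u
    · rw [if_pos h, if_pos (flip_eq_iff.1 h)]
      rw [flip_eq_iff.1 h, sgn_flip_self]
      ring
    · rw [if_neg h, if_neg (fun hc => h (flip_eq_iff.2 hc)), mul_zero]
  rw [Finset.sum_congr rfl step, Finset.sum_ite_eq' Finset.univ, if_pos (Finset.mem_univ _)]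

lemma g_comm (i j : Fin n) : gGen G i * gGen G j = gGen G j * gGen G i := by
  ext v w
  rw [g_mul_apply, g_mul_apply, gGen_apply, gGen_apply]
  by_cases h : w = flip j (flip i v)
  · rw [if_pos h, if_pos (by rw [flip_comm]; exact h)]
    rw [sgn_flip, sgn_flip]
    by_cases hadj : G.Adj i j
    · rw [if_pos ((G.adj_comm i j).1 hadj), if_pos hadj]; ring
    · rw [if_neg (fun hc => hadj ((G.adj_comm j i).1 hc)), if_neg hadj]; ring
  · rw [if_neg h, if_neg (fun hc : w = flip i (flip j v) => h (by rw [← flip_comm]; exact hc)),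
      mul_zero, mul_zero]

lemma g_sq (i : Fin n) : gGen G i * gGen G i = (1 : QMat n) := by
  ext v w
  rw [g_mul_apply, gGen_apply, sgn_flip_self, flip_flip]
  by_cases h : w = v
  · subst h; rw [if_pos rfl, sgn_mul_self, Matrix.one_apply_eq]
  · rw [if_neg h, mul_zero, Matrix.one_apply_ne (Ne.symm h)]

end GPTAux

namespace GPTAux

variable {n : ℕ} (G : SimpleGraph (Fin n)) [DecidableRel G.Adj]

noncomputable def Fac (a : Fin n → Fin 2) (j : Fin n) : QMat n :=
  (2 : ℂ)⁻¹ • ((-1 : ℂ) ^ (a j : ℕ) • gGen G j + 1)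

lemma gBasisProj_eq (a : Fin n → Fin 2) :
    gBasisProj G a = ((List.finRange n).map (Fac G a)).prod := rfl

lemma g_comm_Fac (a : Fin n → Fin 2) (i j : Fin n) :
    gGen G i * Fac G a j = Fac G a j * gGen G i := by
  rw [Fac, Matrix.mul_smul, Matrix.smul_mul, Matrix.mul_add, Matrix.add_mul,
    Matrix.mul_one, Matrix.one_mul, Matrix.mul_smul, Matrix.smul_mul, g_comm]

lemma neg_one_pow_sq (k : ℕ) : ((-1 : ℂ) ^ k) * ((-1 : ℂ) ^ k) = 1 := by
  rw [← pow_add, ← two_mul, pow_mul]; norm_num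

lemma g_mul_Fac_self (a : Fin n → Fin 2) (i : Fin n) :
    gGen G i * Fac G a i = ((-1 : ℂ) ^ (a i : ℕ)) • Fac G a i := by
  have hcc : ((-1 : ℂ) ^ (a i : ℕ)) * ((-1 : ℂ) ^ (a i : ℕ)) = 1 := neg_one_pow_sq _
  rw [Fac, Matrix.mul_smul, Matrix.mul_add, Matrix.mul_one, Matrix.mul_smul, g_sq]
  rw [smul_add, smul_smul, smul_smul, smul_add, smul_smul]
  have h1 : (-1 : ℂ) ^ (a i : ℕ) * 2⁻¹ * (-1 : ℂ) ^ (a i : ℕ) = 2⁻¹ := by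
    linear_combination (2⁻¹ : ℂ) * hcc
  rw [h1, show ((2 : ℂ)⁻¹ * (-1 : ℂ) ^ (a i : ℕ)) = ((-1 : ℂ) ^ (a i : ℕ) * 2⁻¹) from
    mul_comm _ _, add_comm]

lemma g_comm_prod (a : Fin n → Fin 2) (i : Fin n) (L : List (Fin n)) :
    gGen G i * (L.map (Fac G a)).prod = (L.map (Fac G a)).prod * gGen G i := by
  induction L with
  | nil => simp
  | cons j t ih =>
      rw [List.map_cons, List.prod_cons, ← mul_assoc, g_comm_Fac, mul_assoc, ih, mul_assoc]

lemma g_mul_proj (a : Fin n → Fin 2) (i : Fin n) :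
    gGen G i * gBasisProj G a = ((-1 : ℂ) ^ (a i : ℕ)) • gBasisProj G a := by
  obtain ⟨s, t, hst⟩ := List.append_of_mem (List.mem_finRange i)
  rw [gBasisProj_eq, hst, List.map_append, List.prod_append, List.map_cons, List.prod_cons]
  rw [← mul_assoc, g_comm_prod, mul_assoc, ← mul_assoc (gGen G i), g_mul_Fac_self,
    Matrix.smul_mul, Matrix.mul_smul]

lemma proj_mul_g (a : Fin n → Fin 2) (i : Fin n) :
    gBasisProj G a * gGen G i = ((-1 : ℂ) ^ (a i : ℕ)) • gBasisProj G a := by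
  rw [gBasisProj_eq, ← g_comm_prod, ← gBasisProj_eq, g_mul_proj]

lemma qpt_smul (M : Finset (Fin n)) (c : ℂ) (A : QMat n) :
    qpt M (c • A) = c • qpt M A := rfl

lemma qpt_g_left (M : Finset (Fin n)) (i : Fin n)
    (h : insert i (G.neighborFinset i) ⊆ M) (A : QMat n) :
    qpt M (gGen G i * A) = qpt M A * gGen G i := by
  have hiM : i ∈ M := h (Finset.mem_insert_self _ _)
  have hNM : ∀ k, G.Adj i k → k ∈ M := fun k hk =>
    h (Finset.mem_insert_of_mem ((SimpleGraph.mem_neighborFinset _ _ _).2 hk))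
  ext v w
  rw [mul_g_apply, qpt, qpt, g_mul_apply]
  have h1 : sgn G i (fun a => if a ∈ M then w a else v a) = sgn G i w :=
    Finset.prod_congr rfl fun k hk => by
      have hkw : (if k ∈ M then w k else v k) = w k :=
        if_pos (hNM k ((SimpleGraph.mem_neighborFinset _ _ _).1 hk))
      simp only [hkw]
  have h2 : flip i (fun a => if a ∈ M then w a else v a)
      = fun a => if a ∈ M then flip i w a else v a := by
    funext a
    by_cases ha : a = i
    · subst ha
      rw [flip_apply_self, if_pos hiM, if_pos hiM, flip_apply_self]
    · rw [flip_apply_ne _ _ ha]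
      by_cases haM : a ∈ M
      · rw [if_pos haM, if_pos haM, flip_apply_ne _ _ ha]
      · rw [if_neg haM, if_neg haM]
  have h3 : (fun a => if a ∈ M then v a else w a)
      = fun a => if a ∈ M then v a else flip i w a := by
    funext a
    by_cases haM : a ∈ M
    · rw [if_pos haM, if_pos haM]
    · rw [if_neg haM, if_neg haM, flip_apply_ne _ _ (fun hc => haM (by rw [hc]; exact hiM))]
  rw [h1, h2, h3]

lemma qpt_g_right (M : Finset (Fin n)) (i : Fin n)
    (h : insert i (G.neighborFinset i) ⊆ Mᶜ) (A : QMat n) :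
    qpt M (A * gGen G i) = qpt M A * gGen G i := by
  have hiM : i ∉ M := by
    have := h (Finset.mem_insert_self _ _); simpa using this
  have hNM : ∀ k, G.Adj i k → k ∉ M := fun k hk => by
    have := h (Finset.mem_insert_of_mem ((SimpleGraph.mem_neighborFinset _ _ _).2 hk))
    simpa using this
  ext v w
  rw [mul_g_apply, qpt, qpt, mul_g_apply]
  have h1 : sgn G i (fun a => if a ∈ M then v a else w a) = sgn G i w :=
    Finset.prod_congr rfl fun k hk => by
      have hkw : (if k ∈ M then v k else w k) = w k :=
        if_neg (hNM k ((SimpleGraph.mem_neighborFinset _ _ _).1 hk))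
      simp only [hkw]
  have h2 : (fun a => if a ∈ M then (flip i w) a else v a)
      = fun a => if a ∈ M then w a else v a := by
    funext a
    by_cases haM : a ∈ M
    · rw [if_pos haM, if_pos haM, flip_apply_ne _ _ (fun hc => hiM (by rw [← hc]; exact haM))]
    · rw [if_neg haM, if_neg haM]
  have h3 : (fun a => if a ∈ M then v a else (flip i w) a)
      = flip i (fun a => if a ∈ M then v a else w a) := by
    funext a
    by_cases ha : a = i
    · subst ha
      rw [if_neg hiM, flip_apply_self, flip_apply_self, if_neg hiM]
    · have hr : flip i (fun a => if a ∈ M then v a else w a) a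
          = (if a ∈ M then v a else w a) := flip_apply_ne _ _ ha
      rw [hr]
      by_cases haM : a ∈ M
      · rw [if_pos haM, if_pos haM]
      · rw [if_neg haM, if_neg haM, flip_apply_ne _ _ ha]
  rw [h1, h2, h3]

end GPTAux


open GPTAux in
/-- if `a` and `b` differ on a qubit `i` lying in the same partition as
all its neighbors, then `tr(P_b (P_a)^{T_M}) = 0`. -/
theorem trace_graph_proj_partial_transpose_eq_zero
    {n : ℕ} (G : SimpleGraph (Fin n)) [DecidableRel G.Adj] (M : Finset (Fin n))
    (a b : Fin n → Fin 2) (i : Fin n)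
    (hi : insert i (G.neighborFinset i) ⊆ M ∨ insert i (G.neighborFinset i) ⊆ Mᶜ)
    (hab : a i ≠ b i) :
    (gBasisProj G b * qpt M (gBasisProj G a)).trace = 0 := by
  set c : ℂ := (-1 : ℂ) ^ (a i : ℕ) with hc
  set d : ℂ := (-1 : ℂ) ^ (b i : ℕ) with hd
  set Q : QMat n := qpt M (gBasisProj G a) with hQ
  have hQg : Q * gGen G i = c • Q := by
    rcases hi with h | h
    · rw [hQ, ← qpt_g_left G M i h, g_mul_proj, qpt_smul]
    · rw [hQ, ← qpt_g_right G M i h, proj_mul_g, qpt_smul]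
  have key : c * (gBasisProj G b * Q).trace = d * (gBasisProj G b * Q).trace := by
    have e1 : (gBasisProj G b * Q * gGen G i).trace = c * (gBasisProj G b * Q).trace := by
      rw [mul_assoc, hQg, Matrix.mul_smul, Matrix.trace_smul, smul_eq_mul]
    have e2 : (gBasisProj G b * Q * gGen G i).trace = d * (gBasisProj G b * Q).trace := by
      rw [Matrix.trace_mul_comm, ← mul_assoc, g_mul_proj, Matrix.smul_mul,
        Matrix.trace_smul, smul_eq_mul]
    rw [← e1, ← e2]
  have hcd : c ≠ d := by
    rcases fin2 (a i) with h1 | h1 <;> rcases fin2 (b i) with h2 | h2 <;>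
      simp_all [hc, hd] <;> norm_num
  have : (c - d) * (gBasisProj G b * Q).trace = 0 := by ring_nf; linear_combination key
  rcases mul_eq_zero.1 this with h | h
  · exact absurd (sub_eq_zero.1 h) hcd
  · exact h
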